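/- arXiv:2109.05710 — 4 statements merged into one kernel-verified Lean document; each statement's English description precedes it below -/
import Mathlib

section
/- Let n, m be positive integers, L ≥ 0, and let π : ℝ^n → ℝ^m satisfy π(0) = 0 and ‖π(x₁) − π(x₂)‖_∞ ≤ L·‖x₁ − x₂‖_∞ for all x₁, x₂ ∈ ℝ^n. Then there exists a doubly indexed family of functions χ_{ij} : ℝ^n → ℝ (i = 1,…,m, j = 1,…,n) with χ_{ij}(0) = 0 for all i, j, such that for every x ∈ ℝ^n and every i: π(x)_i = Σ_{j=1}^n χ_{ij}(x), and for every choice of nonnegative reals γ_{ij} ≥ 0 and every x ∈ ℝ^n: Σ_{j=1}^n (Σ_{i=1}^m γ_{ij})·L²·x_j² − Σ_{i=1}^m Σ_{j=1}^n γ_{ij}·χ_{ij}(x)² ≥ 0. -/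
/-- **Proposition 1 (quadratic constraint from a Lipschitz-bounded controller).**
If `π : ℝ^n → ℝ^m` vanishes at the origin and is `L`-Lipschitz with respect to the
sup-norm, then there is a doubly indexed family `χ i j : ℝ^n → ℝ`, vanishing at the
origin, such that `π x i = ∑ j, χ i j x`, and for all nonnegative multipliers
`γ i j` the stated quadratic form is nonnegative. -/
theorem lipschitz_controller_quadratic_constraint
    {n m : ℕ} (hn : 0 < n) (hm : 0 < m) (L : ℝ) (hL : 0 ≤ L)
    (π : (Fin n → ℝ) → (Fin m → ℝ))
    (hπ0 : π 0 = 0)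
    (hLip : ∀ x₁ x₂ : Fin n → ℝ, ‖π x₁ - π x₂‖ ≤ L * ‖x₁ - x₂‖) :
    ∃ χ : Fin m → Fin n → (Fin n → ℝ) → ℝ,
      (∀ i j, χ i j 0 = 0) ∧
      (∀ x : Fin n → ℝ, ∀ i : Fin m, π x i = ∑ j, χ i j x) ∧
      (∀ γ : Fin m → Fin n → ℝ, (∀ i j, 0 ≤ γ i j) →
        ∀ x : Fin n → ℝ,
          0 ≤ ∑ j, (∑ i, γ i j) * L ^ 2 * (x j) ^ 2
              - ∑ i, ∑ j, γ i j * (χ i j x) ^ 2) := by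
  -- truncation: keep the first k coordinates
  set T : ℕ → (Fin n → ℝ) → (Fin n → ℝ) :=
    fun k x l => if (l : ℕ) < k then x l else 0 with hT
  have hT0 : ∀ k, T k 0 = 0 := by
    intro k; funext l; simp [hT]
  have hTn : ∀ x, T n x = x := by
    intro x; funext l; simp [hT, l.isLt]
  have hTzero : ∀ x, T 0 x = 0 := by
    intro x; funext l; simp [hT]
  refine ⟨fun i j x => π (T (j + 1) x) i - π (T j x) i, ?_, ?_, ?_⟩
  · intro i j; simp [hT0]
  · intro x i
    rw [Fin.sum_univ_eq_sum_range (fun j => π (T (j + 1) x) i - π (T j x) i)]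
    rw [Finset.sum_range_sub (fun k => π (T k x) i)]
    simp [hTn, hTzero, hπ0]
  · intro γ hγ x
    rw [sub_nonneg, Finset.sum_comm]
    refine Finset.sum_le_sum fun j _ => ?_
    rw [Finset.sum_mul, Finset.sum_mul]
    refine Finset.sum_le_sum fun i _ => ?_
    rw [mul_assoc]
    refine mul_le_mul_of_nonneg_left ?_ (hγ i j)
    have habs : |π (T (↑j + 1) x) i - π (T ↑j x) i| ≤ L * |x j| := by
      calc |π (T (↑j + 1) x) i - π (T ↑j x) i|
          = |(π (T (↑j + 1) x) - π (T ↑j x)) i| := by simp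
        _ ≤ ‖π (T (↑j + 1) x) - π (T ↑j x)‖ := by simpa using norm_le_pi_norm (π (T (↑j + 1) x) - π (T ↑j x)) i
        _ ≤ L * ‖T (↑j + 1) x - T ↑j x‖ := hLip _ _
        _ ≤ L * |x j| := by
            refine mul_le_mul_of_nonneg_left ?_ hL
            refine pi_norm_le_iff_of_nonneg (abs_nonneg _) |>.2 fun l => ?_
            simp only [Pi.sub_apply, hT, Real.norm_eq_abs]
            by_cases h1 : (l : ℕ) < (j : ℕ)
            · simp [h1, Nat.lt_succ_of_lt h1]
            · by_cases h2 : (l : ℕ) < (j : ℕ) + 1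
              · have : (l : ℕ) = (j : ℕ) := by omega
                have hlj : l = j := Fin.ext this
                simp [h1, h2, hlj]
              · simp [h1, h2, abs_nonneg]
    calc (π (T (↑j + 1) x) i - π (T ↑j x) i) ^ 2
        = |π (T (↑j + 1) x) i - π (T ↑j x) i| ^ 2 := (sq_abs _).symm
      _ ≤ (L * |x j|) ^ 2 := by
          exact pow_le_pow_left₀ (abs_nonneg _) habs 2
      _ = L ^ 2 * x j ^ 2 := by rw [mul_pow, sq_abs]
end

section
/- Let p, n be positive integers, let g : ℝ^p → ℝ^n be differentiable on all of ℝ^p with g(0) = 0, and let ℓ, u ∈ ℝ^{n×p} satisfy ℓ_{ij} ≤ ∂g_i/∂z_j(z) ≤ u_{ij} for all z ∈ ℝ^p and all i, j. Then there exists a doubly indexed family of functions ξ_{ij} : ℝ^p → ℝ with ξ_{ij}(0) = 0, such that for every z ∈ ℝ^p and every i: g_i(z) = Σ_{j=1}^p ξ_{ij}(z), and for every i, j and z: min(ℓ_{ij}·z_j, u_{ij}·z_j) ≤ ξ_{ij}(z) ≤ max(ℓ_{ij}·z_j, u_{ij}·z_j). -/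
lemma key_deriv_bound (f d : ℝ → ℝ) (a b : ℝ)
    (hf : ∀ t, HasDerivAt f (d t) t) (hd : ∀ t, a ≤ d t ∧ d t ≤ b) (t : ℝ) :
    min (a * t) (b * t) ≤ f t - f 0 ∧ f t - f 0 ≤ max (a * t) (b * t) := by
  have hφ : Monotone (fun s => f s - a * s) := by
    apply monotone_of_deriv_nonneg
    · exact fun s => ((hf s).sub ((hasDerivAt_id s).const_mul a)).differentiableAt
    · intro s
      have : HasDerivAt (fun s => f s - a * s) (d s - a * 1) s :=
        (hf s).sub ((hasDerivAt_id s).const_mul a)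
      rw [this.deriv]; linarith [(hd s).1]
  have hψ : Monotone (fun s => b * s - f s) := by
    apply monotone_of_deriv_nonneg
    · exact fun s => (((hasDerivAt_id s).const_mul b).sub (hf s)).differentiableAt
    · intro s
      have : HasDerivAt (fun s => b * s - f s) (b * 1 - d s) s :=
        ((hasDerivAt_id s).const_mul b).sub (hf s)
      rw [this.deriv]; linarith [(hd s).2]
  rcases le_or_gt 0 t with ht | ht
  · have h1 := hφ ht; have h2 := hψ ht
    simp only at h1 h2
    constructor
    · exact le_trans (min_le_left _ _) (by linarith)
    · exact le_trans (by linarith : f t - f 0 ≤ b * t) (le_max_right _ _)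
  · have h1 := hφ ht.le; have h2 := hψ ht.le
    simp only at h1 h2
    constructor
    · exact le_trans (min_le_right _ _) (by linarith)
    · exact le_trans (by linarith : f t - f 0 ≤ a * t) (le_max_left _ _)

/-- **One-point additive decomposition of a sector-bounded nonlinearity.**
If `g : ℝ^p → ℝ^n` is differentiable with `g 0 = 0` and entrywise Jacobian bounds
`ℓ i j ≤ ∂g_i/∂z_j` then there is a family `ξ i j : ℝ^p → ℝ` vanishing at
the origin with the stated sum and sector bounds. -/
theorem sector_bounded_additive_decomposition
    {p n : ℕ} (hp : 0 < p) (hn : 0 < n)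
    (g : (Fin p → ℝ) → (Fin n → ℝ)) (hg : Differentiable ℝ g) (hg0 : g 0 = 0)
    (ℓ u : Fin n → Fin p → ℝ)
    (hbound : ∀ z : Fin p → ℝ, ∀ i j,
      ℓ i j ≤ fderiv ℝ g z (Pi.single j 1) i ∧ fderiv ℝ g z (Pi.single j 1) i ≤ u i j) :
    ∃ ξ : Fin n → Fin p → (Fin p → ℝ) → ℝ,
      (∀ i j, ξ i j 0 = 0) ∧
      (∀ z : Fin p → ℝ, ∀ i : Fin n, g z i = ∑ j, ξ i j z) ∧
      (∀ i j, ∀ z : Fin p → ℝ,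
        min (ℓ i j * z j) (u i j * z j) ≤ ξ i j z ∧
        ξ i j z ≤ max (ℓ i j * z j) (u i j * z j)) := by
  -- partial vector: first m coordinates of z, rest 0
  set S : ℕ → (Fin p → ℝ) → (Fin p → ℝ) :=
    fun m z k => if (k : ℕ) < m then z k else 0 with hS
  have hS0 : ∀ m, S m 0 = 0 := by intro m; funext k; simp [hS]
  have hSp : ∀ z, S p z = z := by
    intro z; funext k; simp [hS, k.isLt]
  have hSzero : ∀ z, S 0 z = 0 := by intro z; funext k; simp [hS]
  refine ⟨fun i j z => g (S ((j : ℕ) + 1) z) i - g (S (j : ℕ) z) i, ?_, ?_, ?_⟩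
  · intro i j; simp [hS0]
  · intro z i
    have := Finset.sum_range_sub (fun m => g (S m z) i) p
    calc g z i = ∑ m ∈ Finset.range p, (g (S (m + 1) z) i - g (S m z) i) := by
          rw [this, hSp, hSzero, hg0]; simp
      _ = ∑ j : Fin p, (g (S ((j : ℕ) + 1) z) i - g (S (j : ℕ) z) i) :=
          (Fin.sum_univ_eq_sum_range _ _).symm
  · intro i j z
    set w : Fin p → ℝ := S (j : ℕ) z with hw
    set c : ℝ → (Fin p → ℝ) := fun t => w + t • (Pi.single j 1 : Fin p → ℝ) with hc
    have hc0 : c 0 = w := by simp [hc]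
    have hcz : c (z j) = S ((j : ℕ) + 1) z := by
      funext k
      by_cases hk : k = j
      · subst hk; simp [hc, hw, hS]
      · have hkj : (k : ℕ) ≠ (j : ℕ) := fun h => hk (Fin.ext h)
        have : ((k : ℕ) < (j : ℕ) + 1) ↔ ((k : ℕ) < (j : ℕ)) :=
          ⟨fun h => lt_of_le_of_ne (Nat.lt_succ_iff.mp h) hkj, fun h => Nat.lt_succ_of_lt h⟩
        simp [hc, hw, hS, Pi.single_apply, hk, this]
    have hder : ∀ t : ℝ, HasDerivAt (fun t => g (c t) i)
        (fderiv ℝ g (c t) (Pi.single j 1) i) t := by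
      intro t
      have h1 : HasDerivAt c (Pi.single j 1) t := by
        have : HasDerivAt (fun t : ℝ => t • (Pi.single j 1 : Fin p → ℝ))
            ((1 : ℝ) • (Pi.single j 1 : Fin p → ℝ)) t := (hasDerivAt_id t).smul_const _
        simpa [hc] using this.const_add w
      have h2 : HasDerivAt (fun t => g (c t)) (fderiv ℝ g (c t) (Pi.single j 1)) t :=
        (hg (c t)).hasFDerivAt.comp_hasDerivAt t h1
      exact ((ContinuousLinearMap.proj i :
        (Fin n → ℝ) →L[ℝ] ℝ).hasFDerivAt.comp_hasDerivAt t h2)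
    have := key_deriv_bound (fun t => g (c t) i)
      (fun t => fderiv ℝ g (c t) (Pi.single j 1) i) (ℓ i j) (u i j)
      hder (fun t => hbound (c t) i j) (z j)
    rwa [hcz, hc0] at this
end

section
/- Let n, m be positive integers, L ≥ 0, let ℓ, u ∈ ℝ^{n×(n+m)} with ℓ ≤ u entrywise, and set c_{ij} := (ℓ_{ij} + u_{ij})/2 and c̄_{ij} := max(|ℓ_{ij}|, |u_{ij}|). Fix nonnegative weight families Λ_{ij} ≥ 0 (i = 1,…,n, j = 1,…,n+m) and γ_{ij} ≥ 0 (i = 1,…,m, j = 1,…,n). For x ∈ ℝ^n, χ ∈ ℝ^{m×n}, ξ ∈ ℝ^{n×(n+m)}, define w(x,χ) ∈ ℝ^{n+m} by w_j = x_j for j = 1,…,n and w_{n+i} = Σ_{j=1}^n χ_{ij} for i = 1,…,m; define the sector quadratic form S(x,χ,ξ) := Σ_{i=1}^n Σ_{j=1}^{n+m} Λ_{ij}·[(c̄_{ij}² − c_{ij}²)·w_j² + 2·c_{ij}·w_j·ξ_{ij} − ξ_{ij}²]; define the Lipschitz quadratic form G(x,χ) := Σ_{i=1}^m Σ_{j=1}^n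 γ_{ij}·(L²·x_j² − χ_{ij}²); and define Rξ ∈ ℝ^n by (Rξ)_i = Σ_{j=1}^{n+m} ξ_{ij}. Let P ∈ ℝ^{n×n} be symmetric and A ∈ ℝ^{n×n}, and suppose that for every (x, χ, ξ) ≠ (0, 0, 0): 2·xᵀP(Ax + Rξ) + S(x,χ,ξ) + G(x,χ) < 0. Let X ⊆ ℝ^n and let g : ℝ^n → ℝ^n be such that there exist maps χ̂ : ℝ^n → ℝ^{m×n} and ξ̂ : ℝ^n → ℝ^{n×(n+m)} with, for every x ∈ X: g(x) = A·x + Rξ̂(x), S(x, χ̂(x), ξ̂(x)) ≥ 0, and G(x, χ̂(x)) ≥ 0. Then for every x ∈ X with x ≠ 0: 2·xᵀP·g(x) < 0. -/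
open Finset

/-- The bilinear form `xᵀ P y = ∑ i, ∑ k, x i * P i k * y k`. -/
def bilinP {n : ℕ} (P : Matrix (Fin n) (Fin n) ℝ) (x y : Fin n → ℝ) : ℝ :=
  ∑ i, ∑ k, x i * P i k * y k

/-- The stacked vector `w(x, χ) ∈ ℝ^{n+m}`: `w j = x j` for `j < n` and
`w (n + i) = ∑ j, χ i j` for `i < m`. -/
def stackW {n m : ℕ} (x : Fin n → ℝ) (χ : Fin m → Fin n → ℝ) : Fin (n + m) → ℝ :=
  Fin.addCases (fun j => x j) (fun i => ∑ j, χ i j)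

/-- The sector quadratic form `S(x, χ, ξ)` built from midpoints `c`, radii `c̄`
and nonnegative weights `Λ`, evaluated at the stacked vector `w`. -/
def sectorS {n m : ℕ} (c cbar Λ : Fin n → Fin (n + m) → ℝ)
    (w : Fin (n + m) → ℝ) (ξ : Fin n → Fin (n + m) → ℝ) : ℝ :=
  ∑ i, ∑ j, Λ i j *
    ((cbar i j ^ 2 - c i j ^ 2) * (w j) ^ 2 + 2 * c i j * w j * ξ i j - (ξ i j) ^ 2)

/-- The Lipschitz quadratic form `G(x, χ)`. -/
def lipG {n m : ℕ} (L : ℝ) (γ : Fin m → Fin n → ℝ)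
    (x : Fin n → ℝ) (χ : Fin m → Fin n → ℝ) : ℝ :=
  ∑ i, ∑ j, γ i j * (L ^ 2 * (x j) ^ 2 - (χ i j) ^ 2)

/-- **S-procedure core of Theorem 1.** If the strict quadratic (LMI) condition
holds for all nonzero triples `(x, χ, ξ)`, and on the set `X` the closed-loop
vector field `g` admits a representation `g x = A x + R ξ̂(x)` with the sector
and Lipschitz quadratic forms nonnegative, then `2 xᵀ P g(x) < 0` on `X ∖ {0}`. -/
theorem s_procedure_lyapunov_decrease
    {n m : ℕ} (hn : 0 < n) (hm : 0 < m) (L : ℝ) (hL : 0 ≤ L)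
    (ℓ u : Fin n → Fin (n + m) → ℝ) (hlu : ∀ i j, ℓ i j ≤ u i j)
    (Λ : Fin n → Fin (n + m) → ℝ) (hΛ : ∀ i j, 0 ≤ Λ i j)
    (γ : Fin m → Fin n → ℝ) (hγ : ∀ i j, 0 ≤ γ i j)
    (P A : Matrix (Fin n) (Fin n) ℝ) (hP : P.IsSymm)
    (hLMI : ∀ (x : Fin n → ℝ) (χ : Fin m → Fin n → ℝ) (ξ : Fin n → Fin (n + m) → ℝ),
      ¬(x = 0 ∧ χ = 0 ∧ ξ = 0) →
      2 * bilinP P x (fun k => A.mulVec x k + ∑ j, ξ k j)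
        + sectorS (fun i j => (ℓ i j + u i j) / 2) (fun i j => max |ℓ i j| |u i j|) Λ
            (stackW x χ) ξ
        + lipG L γ x χ < 0)
    (X : Set (Fin n → ℝ)) (g : (Fin n → ℝ) → (Fin n → ℝ))
    (hrep : ∃ (χhat : (Fin n → ℝ) → Fin m → Fin n → ℝ)
              (ξhat : (Fin n → ℝ) → Fin n → Fin (n + m) → ℝ),
      ∀ x ∈ X,
        (∀ k, g x k = A.mulVec x k + ∑ j, ξhat x k j) ∧
        0 ≤ sectorS (fun i j => (ℓ i j + u i j) / 2) (fun i j => max |ℓ i j| |u i j|) Λ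
              (stackW x (χhat x)) (ξhat x) ∧
        0 ≤ lipG L γ x (χhat x)) :
    ∀ x ∈ X, x ≠ 0 → 2 * bilinP P x (g x) < 0 := by
  obtain ⟨χhat, ξhat, h⟩ := hrep
  intro x hx hx0
  obtain ⟨hg, hS, hG⟩ := h x hx
  have hlmi := hLMI x (χhat x) (ξhat x) (by rintro ⟨h1, _, _⟩; exact hx0 h1)
  have hgx : (fun k => A.mulVec x k + ∑ j, ξhat x k j) = g x := by
    funext k; exact (hg k).symm
  rw [hgx] at hlmi
  linarith
end

section
/- Let n be a positive integer, P ∈ ℝ^{n×n} symmetric positive definite, a ∈ ℝ^n, and b > 0. Then the ellipsoid inclusion {x ∈ ℝ^n : xᵀPx ≤ 1} ⊆ {x ∈ ℝ^n : aᵀx ≤ b} holds if and only if aᵀP⁻¹a ≤ b². -/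
/-!
With `u = P⁻¹ a` one has `aᵀx = uᵀPx`, so Cauchy–Schwarz for the inner product `xᵀPy` gives
`(aᵀx)² ≤ (aᵀP⁻¹a)(xᵀPx)`, and `x = u / √(aᵀP⁻¹a)` attains `aᵀx = √(aᵀP⁻¹a)` on the ellipsoid.
Hence `√(aᵀP⁻¹a)` is the maximum of `aᵀx` over the ellipsoid, and it is at most `b > 0`
exactly when `aᵀP⁻¹a ≤ b²`.
-/

open Matrix

theorem Matrix.sum_sum_mul_mul_eq_dotProduct_mulVec {m n R : Type*} [Fintype m] [Fintype n]
    [CommSemiring R] (M : Matrix m n R) (x : m → R) (y : n → R) :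
    ∑ i, ∑ k, x i * M i k * y k = x ⬝ᵥ (M *ᵥ y) := by
  simp only [dotProduct, mulVec, Finset.mul_sum, mul_assoc]

namespace Matrix

variable {ι : Type*} [Fintype ι]

theorem PosSemidef.dotProduct_mulVec_sq_le {M : Matrix ι ι ℝ} (hM : M.PosSemidef)
    (x y : ι → ℝ) : (x ⬝ᵥ (M *ᵥ y)) ^ 2 ≤ (x ⬝ᵥ (M *ᵥ x)) * (y ⬝ᵥ (M *ᵥ y)) := by
  let := M.toSeminormedAddCommGroup hM
  let := M.toInnerProductSpace hM
  have h : (M *ᵥ y) ⬝ᵥ x * ((M *ᵥ y) ⬝ᵥ x) ≤ (M *ᵥ x) ⬝ᵥ x * ((M *ᵥ y) ⬝ᵥ y) :=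
    real_inner_mul_inner_self_le x y
  simpa only [dotProduct_comm _ x, dotProduct_comm _ y, sq] using h

variable [DecidableEq ι] {P : Matrix ι ι ℝ}

theorem PosDef.mulVec_inv_mulVec (hP : P.PosDef) (a : ι → ℝ) : P *ᵥ (P⁻¹ *ᵥ a) = a := by
  rw [mulVec_mulVec, P.mul_nonsing_inv (P.isUnit_iff_isUnit_det.mp hP.isUnit), one_mulVec]

theorem PosDef.dotProduct_inv_mulVec_nonneg (hP : P.PosDef) (a : ι → ℝ) :
    0 ≤ a ⬝ᵥ (P⁻¹ *ᵥ a) := by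
  simpa using hP.inv.posSemidef.dotProduct_mulVec_nonneg a

theorem PosDef.dotProduct_sq_le (hP : P.PosDef) (a x : ι → ℝ) :
    (a ⬝ᵥ x) ^ 2 ≤ (a ⬝ᵥ (P⁻¹ *ᵥ a)) * (x ⬝ᵥ (P *ᵥ x)) := by
  set u := P⁻¹ *ᵥ a
  calc (a ⬝ᵥ x) ^ 2 = (x ⬝ᵥ (P *ᵥ u)) ^ 2 := by rw [hP.mulVec_inv_mulVec, dotProduct_comm]
    _ ≤ (x ⬝ᵥ (P *ᵥ x)) * (u ⬝ᵥ (P *ᵥ u)) := hP.posSemidef.dotProduct_mulVec_sq_le x u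
    _ = (a ⬝ᵥ u) * (x ⬝ᵥ (P *ᵥ x)) := by rw [hP.mulVec_inv_mulVec, dotProduct_comm u, mul_comm]

theorem PosDef.exists_dotProduct_eq_sqrt (hP : P.PosDef) (a : ι → ℝ) :
    ∃ x, x ⬝ᵥ (P *ᵥ x) ≤ 1 ∧ a ⬝ᵥ x = √(a ⬝ᵥ (P⁻¹ *ᵥ a)) := by
  set s := √(a ⬝ᵥ (P⁻¹ *ᵥ a))
  have hs : s * s = a ⬝ᵥ (P⁻¹ *ᵥ a) := Real.mul_self_sqrt (hP.dotProduct_inv_mulVec_nonneg a)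
  -- for `s = 0` the witness is `0`, since `0⁻¹ = 0`
  have hax : a ⬝ᵥ (s⁻¹ • (P⁻¹ *ᵥ a)) = s := by
    rw [dotProduct_smul, ← hs, smul_eq_mul, ← mul_assoc, inv_mul_mul_self]
  refine ⟨s⁻¹ • (P⁻¹ *ᵥ a), ?_, hax⟩
  rw [mulVec_smul, hP.mulVec_inv_mulVec, dotProduct_comm, smul_dotProduct, hax, smul_eq_mul]
  exact inv_mul_le_one

theorem PosDef.forall_dotProduct_le_iff_sqrt_le (hP : P.PosDef) (a : ι → ℝ) (b : ℝ) :
    (∀ x, x ⬝ᵥ (P *ᵥ x) ≤ 1 → a ⬝ᵥ x ≤ b) ↔ √(a ⬝ᵥ (P⁻¹ *ᵥ a)) ≤ b := by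
  refine ⟨fun h ↦ ?_, fun h x hx ↦ ?_⟩
  · obtain ⟨x, hx, hax⟩ := hP.exists_dotProduct_eq_sqrt a
    exact hax ▸ h x hx
  · have hsq : (a ⬝ᵥ x) ^ 2 ≤ a ⬝ᵥ (P⁻¹ *ᵥ a) :=
      (hP.dotProduct_sq_le a x).trans
        (mul_le_of_le_one_right (hP.dotProduct_inv_mulVec_nonneg a) hx)
    exact (le_abs_self _).trans ((Real.abs_le_sqrt hsq).trans h)

end Matrix

theorem ellipsoid_subset_halfspace_iff_general
    {n : ℕ}
    (P : Matrix (Fin n) (Fin n) ℝ) (hP : P.IsSymm)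
    (hPpos : ∀ z : Fin n → ℝ, z ≠ 0 → 0 < ∑ i, ∑ k, z i * P i k * z k)
    (a : Fin n → ℝ) (b : ℝ) (hb : 0 < b) :
    {x : Fin n → ℝ | (∑ i, ∑ k, x i * P i k * x k) ≤ 1} ⊆
        {x : Fin n → ℝ | (∑ k, a k * x k) ≤ b} ↔
      (∑ i, ∑ k, a i * P⁻¹ i k * a k) ≤ b ^ 2 := by
  simp only [sum_sum_mul_mul_eq_dotProduct_mulVec] at hPpos ⊢
  have hPD : P.PosDef := .of_dotProduct_mulVec_pos (isHermitian_iff_isSymm.mpr hP)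
    fun z hz ↦ by simpa using hPpos z hz
  rw [← Real.sqrt_le_left hb.le]
  exact hPD.forall_dotProduct_le_iff_sqrt_le a b

/-- **Ellipsoid-in-halfspace characterization (used in Algorithm 1).**
For a symmetric positive definite `P`, `a ∈ ℝ^n` and `b > 0`:
`{x : xᵀPx ≤ 1} ⊆ {x : aᵀx ≤ b}` if and only if `aᵀ P⁻¹ a ≤ b²`. -/
theorem ellipsoid_subset_halfspace_iff
    {n : ℕ} (hn : 0 < n)
    (P : Matrix (Fin n) (Fin n) ℝ) (hP : P.IsSymm)
    (hPpos : ∀ z : Fin n → ℝ, z ≠ 0 → 0 < ∑ i, ∑ k, z i * P i k * z k)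
    (a : Fin n → ℝ) (b : ℝ) (hb : 0 < b) :
    {x : Fin n → ℝ | (∑ i, ∑ k, x i * P i k * x k) ≤ 1} ⊆
        {x : Fin n → ℝ | (∑ k, a k * x k) ≤ b} ↔
      (∑ i, ∑ k, a i * P⁻¹ i k * a k) ≤ b ^ 2 :=
  ellipsoid_subset_halfspace_iff_general P hP hPpos a b hb
end
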